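/- arXiv:1901.08519 — 2 statements merged into one kernel-verified Lean document; each statement's English description precedes it below -/
import Mathlib

section
/- Assume |f| ≤ M, let K = max(1,M), p = min_{1≤j≤m} P(A_j) > 0, and let n > 0, n_N > 0, Λ ≥ 0, Λ' ≥ 0, Δ ≥ 0 be reals with Λ < p·√n. Let μ and μ̃ be two real-valued maps on bounded measurable functions such that for every g ∈ {f·1_{A_1},…,f·1_{A_m}, 1_{A_1},…,1_{A_m}}: |√n·(μ(g) − P(g))| ≤ Λ, |√n·(μ̃(g) − P(g))| ≤ Λ, and |√n·(μ̃(g) − μ(g))| ≤ Δ. Suppose p'_1,…,p'_m ∈ [0,1] satisfy √(n_N)·|p'_j − P(A_j)| ≤ Λ' for all j. Define ν(f) = Σ_j [P(A_j)/μ(1_{A_j})]·μ(f·1_{A_j}) and ν̃(f) = Σ_j [p'_j/μ̃(1_{A_j})]·μ̃(f·1_{A_j}). Then |√n·(ν̃(f) − ν(f))| ≤ [4mK/(p − Λ/√n)²]·( Δ + Λ²/√n + Λ'·(Λ + √n)/√(n_N) ). -/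
/-!
Cell by cell, the difference of the two ratio estimates `p'_j μ̃(f 1_{A_j}) / μ̃(1_{A_j})` and
`P(A_j) μ(f 1_{A_j}) / μ(1_{A_j})` splits into a perturbation of the weight, of the numerator and
of the denominator. The deviation hypotheses keep both denominators above `p - Λ/√n` and both
numerators below `2K`, so after scaling by `√n` each cell contributes at most
`4K/(p - Λ/√n)² · (Δ + Λ'√n/√n_N)`; summing over the `m` cells gives the bound.
-/

open MeasureTheory

theorem abs_div_mul_sub_div_mul_le {x x' a a' b b' q C ε δ : ℝ} (hq : 0 < q)
    (hb : q ≤ b) (hb' : q ≤ b') (hx : |x| ≤ 1) (ha : |a| ≤ C) (ha' : |a'| ≤ C)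
    (hxx : |x' - x| ≤ ε) (haa : |a' - a| ≤ δ) (hbb : |b' - b| ≤ δ) :
    |x' / b' * a' - x / b * a| ≤ (C * ε + δ) / q + C * δ / q ^ 2 := by
  have hb0 : 0 < b := hq.trans_le hb
  have hb'0 : 0 < b' := hq.trans_le hb'
  have hC : 0 ≤ C := (abs_nonneg a).trans ha
  have hε : 0 ≤ ε := (abs_nonneg _).trans hxx
  have hδ : 0 ≤ δ := (abs_nonneg _).trans haa
  have hdecomp : x' / b' * a' - x / b * a
      = ((x' - x) * a' + x * (a' - a)) / b' - x * a * (b' - b) / (b * b') := by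
    field_simp
    ring
  have hfirst : |((x' - x) * a' + x * (a' - a)) / b'| ≤ (C * ε + δ) / q := by
    rw [abs_div, abs_of_pos hb'0]
    gcongr
    calc |(x' - x) * a' + x * (a' - a)| ≤ |x' - x| * |a'| + |x| * |a' - a| := by
          simpa only [abs_mul] using abs_add_le ((x' - x) * a') (x * (a' - a))
      _ ≤ ε * C + 1 * δ := by gcongr
      _ = C * ε + δ := by ring
  have hsecond : |x * a * (b' - b) / (b * b')| ≤ C * δ / q ^ 2 := by
    rw [abs_div, abs_mul, abs_mul, abs_of_pos (mul_pos hb0 hb'0), sq]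
    calc |x| * |a| * |b' - b| / (b * b') ≤ 1 * C * δ / (q * q) := by gcongr
      _ = C * δ / (q * q) := by ring
  rw [hdecomp]
  exact (abs_sub _ _).trans (add_le_add hfirst hsecond)

theorem abs_sub_le_div_of_abs_mul_le {s t c : ℝ} (hs : 0 < s) (h : |s * t| ≤ c) :
    |t| ≤ c / s := by
  rwa [le_div_iff₀ hs, mul_comm, ← abs_of_pos hs, ← abs_mul]

section

variable {𝒳 : Type*} [MeasurableSpace 𝒳] {P : Measure 𝒳} [IsProbabilityMeasure P]

theorem abs_integral_mul_indicator_le {f : 𝒳 → ℝ} {M : ℝ} (hf : ∀ x, |f x| ≤ M)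
    (A : Set 𝒳) :
    |∫ x, f x * A.indicator 1 x ∂P| ≤ M := by
  have hbound : ∀ x, ‖f x * A.indicator 1 x‖ ≤ M := fun x => by
    by_cases hx : x ∈ A
    · simpa [hx] using hf x
    · simpa [hx] using (abs_nonneg _).trans (hf x)
  simpa using norm_integral_le_of_norm_le_const (μ := P) (Filter.Eventually.of_forall hbound)

theorem abs_mul_ratio_estimate_sub_le {A : Set 𝒳} {f : 𝒳 → ℝ} {μ μt : (𝒳 → ℝ) → ℝ}
    {M K p s Λ Δ ε x : ℝ} (hfb : ∀ x, |f x| ≤ M) (hMK : M ≤ K) (hK : 1 ≤ K) (hs : 0 < s)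
    (hΛ0 : 0 ≤ Λ) (hΛp : Λ < p * s) (hpA : p ≤ (P A).toReal)
    (hμf : |s * (μ (fun y => f y * A.indicator 1 y) - ∫ y, f y * A.indicator 1 y ∂P)| ≤ Λ)
    (hμA : |s * (μ (A.indicator 1) - (P A).toReal)| ≤ Λ)
    (hμtf :
      |s * (μt (fun y => f y * A.indicator 1 y) - ∫ y, f y * A.indicator 1 y ∂P)| ≤ Λ)
    (hμtA : |s * (μt (A.indicator 1) - (P A).toReal)| ≤ Λ)
    (hdf :
      |s * (μt (fun y => f y * A.indicator 1 y) - μ (fun y => f y * A.indicator 1 y))| ≤ Δ)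
    (hdA : |s * (μt (A.indicator 1) - μ (A.indicator 1))| ≤ Δ)
    (hx : |x - (P A).toReal| ≤ ε) :
    |s * (x / μt (A.indicator 1) * μt (fun y => f y * A.indicator 1 y)
        - (P A).toReal / μ (A.indicator 1) * μ (fun y => f y * A.indicator 1 y))|
      ≤ 4 * K / (p - Λ / s) ^ 2 * (Δ + ε * s) := by
  have hΔ : 0 ≤ Δ := (abs_nonneg _).trans hdA
  have hε : 0 ≤ ε := (abs_nonneg _).trans hx
  have hΛs : Λ / s < p := (div_lt_iff₀ hs).2 hΛp
  have hPA : (P A).toReal ≤ 1 := measureReal_le_one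
  set q := p - Λ / s
  have hq : 0 < q := sub_pos.2 hΛs
  have hq1 : q ≤ 1 := by linarith [div_nonneg hΛ0 hs.le]
  have hden (b : ℝ) (hb : |s * (b - (P A).toReal)| ≤ Λ) : q ≤ b := by
    linarith [(abs_le.1 (abs_sub_le_div_of_abs_mul_le hs hb)).1]
  have hnum (a : ℝ) (ha : |s * (a - ∫ y, f y * A.indicator 1 y ∂P)| ≤ Λ) : |a| ≤ 2 * K := by
    have hI := abs_integral_mul_indicator_le (P := P) hfb A
    have haI := abs_sub_le_div_of_abs_mul_le hs ha
    linarith [abs_sub_abs_le_abs_sub a (∫ y, f y * A.indicator 1 y ∂P)]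
  have hratio := abs_div_mul_sub_div_mul_le hq (hden _ hμA) (hden _ hμtA)
    (by rwa [abs_of_nonneg ENNReal.toReal_nonneg]) (hnum _ hμf) (hnum _ hμtf) hx
    (abs_sub_le_div_of_abs_mul_le hs hdf) (abs_sub_le_div_of_abs_mul_le hs hdA)
  rw [abs_mul, abs_of_pos hs]
  calc s * |_| ≤ s * ((2 * K * ε + Δ / s) / q + 2 * K * (Δ / s) / q ^ 2) := by gcongr
    _ = (2 * K * ε * s + Δ) * q / q ^ 2 + 2 * K * Δ / q ^ 2 := by field_simp
    _ ≤ (2 * K * ε * s + Δ) * 1 / q ^ 2 + 2 * K * Δ / q ^ 2 := by gcongr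
    _ ≤ 4 * K / q ^ 2 * (Δ + ε * s) := by
      rw [← add_div, div_mul_eq_mul_div]
      gcongr
      nlinarith [mul_nonneg hε hs.le]

end

theorem stmt_6_general {𝒳 : Type*} [MeasurableSpace 𝒳] (P : Measure 𝒳) [IsProbabilityMeasure P]
    (m : ℕ) (A : ℕ → Set 𝒳)
    (f : 𝒳 → ℝ) (M : ℝ) (hfb : ∀ x, |f x| ≤ M)
    (K : ℝ) (hK : K = max 1 M)
    (p : ℝ) (hp : IsLeast {r : ℝ | ∃ j < m, r = (P (A j)).toReal} p)
    (n nN Λ Λ' Δ : ℝ) (hn : 0 < n) (hnN : 0 < nN)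
    (hΛ0 : 0 ≤ Λ) (hΛ'0 : 0 ≤ Λ')
    (hΛp : Λ < p * Real.sqrt n)
    (μ μt : (𝒳 → ℝ) → ℝ)
    (hμf : ∀ j < m, |Real.sqrt n * (μ (fun x => f x * (A j).indicator (1 : 𝒳 → ℝ) x)
        - ∫ x, f x * (A j).indicator (1 : 𝒳 → ℝ) x ∂P)| ≤ Λ)
    (hμA : ∀ j < m,
      |Real.sqrt n * (μ ((A j).indicator (1 : 𝒳 → ℝ)) - (P (A j)).toReal)| ≤ Λ)
    (hμtf : ∀ j < m, |Real.sqrt n * (μt (fun x => f x * (A j).indicator (1 : 𝒳 → ℝ) x)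
        - ∫ x, f x * (A j).indicator (1 : 𝒳 → ℝ) x ∂P)| ≤ Λ)
    (hμtA : ∀ j < m,
      |Real.sqrt n * (μt ((A j).indicator (1 : 𝒳 → ℝ)) - (P (A j)).toReal)| ≤ Λ)
    (hdf : ∀ j < m, |Real.sqrt n * (μt (fun x => f x * (A j).indicator (1 : 𝒳 → ℝ) x)
        - μ (fun x => f x * (A j).indicator (1 : 𝒳 → ℝ) x))| ≤ Δ)
    (hdA : ∀ j < m,
      |Real.sqrt n * (μt ((A j).indicator (1 : 𝒳 → ℝ)) - μ ((A j).indicator (1 : 𝒳 → ℝ)))| ≤ Δ)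
    (p' : ℕ → ℝ)
    (hp' : ∀ j < m, Real.sqrt nN * |p' j - (P (A j)).toReal| ≤ Λ') :
    |Real.sqrt n * ((∑ j ∈ Finset.range m, p' j / μt ((A j).indicator (1 : 𝒳 → ℝ))
            * μt (fun x => f x * (A j).indicator (1 : 𝒳 → ℝ) x))
        - (∑ j ∈ Finset.range m, (P (A j)).toReal / μ ((A j).indicator (1 : 𝒳 → ℝ))
            * μ (fun x => f x * (A j).indicator (1 : 𝒳 → ℝ) x)))|
      ≤ 4 * (m : ℝ) * K / (p - Λ / Real.sqrt n) ^ 2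
          * (Δ + Λ ^ 2 / Real.sqrt n + Λ' * (Λ + Real.sqrt n) / Real.sqrt nN) := by
  have hs := Real.sqrt_pos.2 hn
  have hsN := Real.sqrt_pos.2 hnN
  have hK1 : 1 ≤ K := hK ▸ le_max_left 1 M
  have hterm := fun j (hj : j ∈ Finset.range m) =>
    have hj := Finset.mem_range.1 hj
    abs_mul_ratio_estimate_sub_le hfb (hK ▸ le_max_right 1 M) hK1 hs hΛ0 hΛp
      (hp.2 ⟨j, hj, rfl⟩)
      (hμf j hj) (hμA j hj) (hμtf j hj) (hμtA j hj) (hdf j hj) (hdA j hj)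
      (le_div_iff₀' hsN |>.2 (hp' j hj))
  rw [← Finset.sum_sub_distrib, Finset.mul_sum]
  calc _ ≤ _ := Finset.abs_sum_le_sum_abs _ _
    _ ≤ _ := Finset.sum_le_sum hterm
    _ = 4 * m * K / (p - Λ / √n) ^ 2 * (Δ + Λ' * √n / √nN) := by
      rw [Finset.sum_const, Finset.card_range, nsmul_eq_mul]; ring
    _ ≤ _ := by
      gcongr
      · exact le_add_of_nonneg_right (by positivity)
      · linarith

/-- Comparison of a true raking step and a learned raking step: with
`ν(f) = ∑_j [P(A_j)/μ(1_{A_j})]·μ(f·1_{A_j})` and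
`ν̃(f) = ∑_j [p'_j/μ̃(1_{A_j})]·μ̃(f·1_{A_j})`, under the stated deviation bounds,
`|√n(ν̃(f) − ν(f))| ≤ [4mK/(p − Λ/√n)²]·(Δ + Λ²/√n + Λ'(Λ + √n)/√(n_N))`. -/
theorem stmt_6 {𝒳 : Type*} [MeasurableSpace 𝒳] (P : Measure 𝒳) [IsProbabilityMeasure P]
    (m : ℕ) (hm : 1 ≤ m) (A : ℕ → Set 𝒳)
    (hmeas : ∀ j < m, MeasurableSet (A j))
    (hdisj : ∀ j < m, ∀ k < m, j ≠ k → Disjoint (A j) (A k))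
    (hcover : ⋃ j ∈ Finset.range m, A j = Set.univ)
    (f : 𝒳 → ℝ) (hf : Measurable f) (M : ℝ) (hfb : ∀ x, |f x| ≤ M)
    (K : ℝ) (hK : K = max 1 M)
    (p : ℝ) (hp : IsLeast {r : ℝ | ∃ j < m, r = (P (A j)).toReal} p) (hp0 : 0 < p)
    (n nN Λ Λ' Δ : ℝ) (hn : 0 < n) (hnN : 0 < nN)
    (hΛ0 : 0 ≤ Λ) (hΛ'0 : 0 ≤ Λ') (hΔ0 : 0 ≤ Δ)
    (hΛp : Λ < p * Real.sqrt n)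
    (μ μt : (𝒳 → ℝ) → ℝ)
    (hμf : ∀ j < m, |Real.sqrt n * (μ (fun x => f x * (A j).indicator (1 : 𝒳 → ℝ) x)
        - ∫ x, f x * (A j).indicator (1 : 𝒳 → ℝ) x ∂P)| ≤ Λ)
    (hμA : ∀ j < m,
      |Real.sqrt n * (μ ((A j).indicator (1 : 𝒳 → ℝ)) - (P (A j)).toReal)| ≤ Λ)
    (hμtf : ∀ j < m, |Real.sqrt n * (μt (fun x => f x * (A j).indicator (1 : 𝒳 → ℝ) x)
        - ∫ x, f x * (A j).indicator (1 : 𝒳 → ℝ) x ∂P)| ≤ Λ)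
    (hμtA : ∀ j < m,
      |Real.sqrt n * (μt ((A j).indicator (1 : 𝒳 → ℝ)) - (P (A j)).toReal)| ≤ Λ)
    (hdf : ∀ j < m, |Real.sqrt n * (μt (fun x => f x * (A j).indicator (1 : 𝒳 → ℝ) x)
        - μ (fun x => f x * (A j).indicator (1 : 𝒳 → ℝ) x))| ≤ Δ)
    (hdA : ∀ j < m,
      |Real.sqrt n * (μt ((A j).indicator (1 : 𝒳 → ℝ)) - μ ((A j).indicator (1 : 𝒳 → ℝ)))| ≤ Δ)
    (p' : ℕ → ℝ) (hp'01 : ∀ j < m, 0 ≤ p' j ∧ p' j ≤ 1)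
    (hp' : ∀ j < m, Real.sqrt nN * |p' j - (P (A j)).toReal| ≤ Λ') :
    |Real.sqrt n * ((∑ j ∈ Finset.range m, p' j / μt ((A j).indicator (1 : 𝒳 → ℝ))
            * μt (fun x => f x * (A j).indicator (1 : 𝒳 → ℝ) x))
        - (∑ j ∈ Finset.range m, (P (A j)).toReal / μ ((A j).indicator (1 : 𝒳 → ℝ))
            * μ (fun x => f x * (A j).indicator (1 : 𝒳 → ℝ) x)))|
      ≤ 4 * (m : ℝ) * K / (p - Λ / Real.sqrt n) ^ 2
          * (Δ + Λ ^ 2 / Real.sqrt n + Λ' * (Λ + Real.sqrt n) / Real.sqrt nN) :=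
  stmt_6_general P m A f M hfb K hK p hp n nN Λ Λ' Δ hn hnN hΛ0 hΛ'0 hΛp μ μt hμf hμA hμtf hμtA hdf
    hdA p' hp'
end

section
/- If moreover P(A ∩ B) = P(A)·P(B), then Var_P( f − (Δ_A/p_Ā)·1_A − (Δ_B/p_B̄)·1_B ) = Var_P(f) − (p_A/p_Ā)·Δ_A² − (p_B/p_B̄)·Δ_B². (This is the asymptotic variance σ_f^(∞) of the stabilized raking-ratio Gaussian process when A and B are independent.) -/
/-!
Expand the variance of `f - a • 1_A - b • 1_B` bilinearly in covariances. Independence kills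
`Cov(1_A, 1_B)`, while `Var(1_A) = p_A p_Ā` and `Cov(f, 1_A) = p_A Δ_A`, so for `a = Δ_A / p_Ā`
the `A`-terms contribute `a² p_A p_Ā - 2 a p_A Δ_A = -(p_A / p_Ā) Δ_A²`, and likewise for `B`.
-/

open MeasureTheory ProbabilityTheory

namespace ProbabilityTheory

variable {Ω : Type*} {mΩ : MeasurableSpace Ω} {μ : Measure Ω} {X Y Z : Ω → ℝ}

lemma covariance_self_eq_integral_sq_sub [IsProbabilityMeasure μ] (hX : MemLp X 2 μ) :
    cov[X, X; μ] = (∫ ω, X ω ^ 2 ∂μ) - (∫ ω, X ω ∂μ) ^ 2 := by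
  simp only [covariance_eq_sub hX hX, Pi.mul_apply, sq]

lemma covariance_sub_mul_sub_mul_self [IsFiniteMeasure μ] (hX : MemLp X 2 μ) (hY : MemLp Y 2 μ)
    (hZ : MemLp Z 2 μ) (a b : ℝ) :
    cov[fun ω ↦ X ω - a * Y ω - b * Z ω, fun ω ↦ X ω - a * Y ω - b * Z ω; μ]
      = cov[X, X; μ] + a ^ 2 * cov[Y, Y; μ] + b ^ 2 * cov[Z, Z; μ]
        - 2 * a * cov[X, Y; μ] - 2 * b * cov[X, Z; μ] + 2 * a * b * cov[Y, Z; μ] := by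
  have haY : MemLp (fun ω ↦ a * Y ω) 2 μ := hY.const_mul a
  have hbZ : MemLp (fun ω ↦ b * Z ω) 2 μ := hZ.const_mul b
  have hXaY : MemLp (fun ω ↦ X ω - a * Y ω) 2 μ := hX.sub haY
  have hg : MemLp (fun ω ↦ X ω - a * Y ω - b * Z ω) 2 μ := hXaY.sub hbZ
  rw [covariance_fun_sub_left hXaY hbZ hg, covariance_fun_sub_left hX haY hg,
    covariance_const_mul_left, covariance_const_mul_left,
    covariance_fun_sub_right hX hXaY hbZ, covariance_fun_sub_right hX hX haY,
    covariance_fun_sub_right hY hXaY hbZ, covariance_fun_sub_right hY hX haY,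
    covariance_fun_sub_right hZ hXaY hbZ, covariance_fun_sub_right hZ hX haY]
  simp only [covariance_const_mul_right]
  rw [covariance_comm Y X, covariance_comm Z X, covariance_comm Z Y]
  ring

lemma memLp_indicator_one [IsFiniteMeasure μ] (p : ENNReal) {s : Set Ω} (hs : MeasurableSet s) :
    MemLp (s.indicator (1 : Ω → ℝ)) p μ :=
  (memLp_const 1).indicator hs

variable [IsProbabilityMeasure μ] {s t : Set Ω}

lemma covariance_indicator_one_right (hX : MemLp X 2 μ) (ht : MeasurableSet t) :
    cov[X, t.indicator 1; μ] = (∫ ω, X ω * t.indicator 1 ω ∂μ) - μ[X] * μ.real t := by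
  rw [covariance_eq_sub hX (memLp_indicator_one 2 ht), integral_indicator_one ht]
  rfl

lemma covariance_indicator_one_indicator_one (hs : MeasurableSet s) (ht : MeasurableSet t) :
    cov[s.indicator 1, t.indicator 1; μ] = μ.real (s ∩ t) - μ.real s * μ.real t := by
  rw [covariance_eq_sub (memLp_indicator_one 2 hs) (memLp_indicator_one 2 ht),
    ← Set.inter_indicator_one, integral_indicator_one (hs.inter ht), integral_indicator_one hs,
    integral_indicator_one ht]

lemma covariance_indicator_one_self (hs : MeasurableSet s) :
    cov[s.indicator 1, s.indicator 1; μ] = μ.real s * μ.real sᶜ := by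
  rw [covariance_indicator_one_indicator_one hs hs, Set.inter_self, probReal_compl_eq_one_sub hs]
  ring

end ProbabilityTheory

/-- Asymptotic variance `σ_f^(∞)` of the stabilized raking-ratio Gaussian process for the
two partitions `{A, Aᶜ}` and `{B, Bᶜ}` when `A` and `B` are independent:
`Var_P(f − (Δ_A/p_Ā)·1_A − (Δ_B/p_B̄)·1_B) = Var_P(f) − (p_A/p_Ā)Δ_A² − (p_B/p_B̄)Δ_B²`. -/
theorem stmt_16 {𝒳 : Type*} [MeasurableSpace 𝒳] (P : Measure 𝒳) [IsProbabilityMeasure P]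
    (f : 𝒳 → ℝ) (hf : Measurable f) (M : ℝ) (hfb : ∀ x, |f x| ≤ M)
    (A B : Set 𝒳) (hA : MeasurableSet A) (hB : MeasurableSet B)
    (hA0 : 0 < P A) (hA1 : P A < 1) (hB0 : 0 < P B) (hB1 : P B < 1)
    (hindep : P (A ∩ B) = P A * P B)
    (pA pAbar pB pBbar Pf EfA EfB ΔA ΔB : ℝ)
    (hpA : pA = (P A).toReal) (hpAbar : pAbar = (P Aᶜ).toReal)
    (hpB : pB = (P B).toReal) (hpBbar : pBbar = (P Bᶜ).toReal)
    (hPf : Pf = ∫ x, f x ∂P)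
    (hEfA : EfA = (∫ x, f x * A.indicator (1 : 𝒳 → ℝ) x ∂P) / pA)
    (hEfB : EfB = (∫ x, f x * B.indicator (1 : 𝒳 → ℝ) x ∂P) / pB)
    (hΔA : ΔA = EfA - Pf) (hΔB : ΔB = EfB - Pf) :
    (∫ x, (f x - ΔA / pAbar * A.indicator (1 : 𝒳 → ℝ) x
            - ΔB / pBbar * B.indicator (1 : 𝒳 → ℝ) x) ^ 2 ∂P)
        - (∫ x, (f x - ΔA / pAbar * A.indicator (1 : 𝒳 → ℝ) x
            - ΔB / pBbar * B.indicator (1 : 𝒳 → ℝ) x) ∂P) ^ 2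
      = ((∫ x, f x ^ 2 ∂P) - (∫ x, f x ∂P) ^ 2)
        - pA / pAbar * ΔA ^ 2 - pB / pBbar * ΔB ^ 2 := by
  have hfL2 : MemLp f 2 P :=
    .of_bound hf.aestronglyMeasurable M
      (ae_of_all _ fun x ↦ (Real.norm_eq_abs _).trans_le (hfb x))
  have hAL2 : MemLp (A.indicator 1) 2 P := memLp_indicator_one 2 hA
  have hBL2 : MemLp (B.indicator 1) 2 P := memLp_indicator_one 2 hB
  have hpA0 : pA ≠ 0 := by rw [hpA]; exact (measureReal_ne_zero_iff).mpr hA0.ne'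
  have hpB0 : pB ≠ 0 := by rw [hpB]; exact (measureReal_ne_zero_iff).mpr hB0.ne'
  have hpAbar0 : pAbar ≠ 0 := by
    rw [hpAbar]; exact (measureReal_ne_zero_iff).mpr ((prob_compl_eq_zero_iff hA).not.mpr hA1.ne)
  have hpBbar0 : pBbar ≠ 0 := by
    rw [hpBbar]; exact (measureReal_ne_zero_iff).mpr ((prob_compl_eq_zero_iff hB).not.mpr hB1.ne)
  have hcovA : cov[f, A.indicator 1; P] = pA * ΔA := by
    rw [covariance_indicator_one_right hfL2 hA, measureReal_def, ← hpA, ← hPf, hΔA, hEfA]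
    field_simp
  have hcovB : cov[f, B.indicator 1; P] = pB * ΔB := by
    rw [covariance_indicator_one_right hfL2 hB, measureReal_def, ← hpB, ← hPf, hΔB, hEfB]
    field_simp
  have hcovAB : cov[A.indicator 1, B.indicator 1; P] = 0 := by
    rw [covariance_indicator_one_indicator_one hA hB, measureReal_def, hindep, ENNReal.toReal_mul,
      measureReal_def, measureReal_def, sub_self]
  have hgL2 : MemLp (fun x ↦ f x - ΔA / pAbar * A.indicator 1 x - ΔB / pBbar * B.indicator 1 x)
      2 P := (hfL2.sub (hAL2.const_mul _)).sub (hBL2.const_mul _)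
  rw [← covariance_self_eq_integral_sq_sub hgL2,
    ← covariance_self_eq_integral_sq_sub hfL2, covariance_sub_mul_sub_mul_self hfL2 hAL2 hBL2,
    covariance_indicator_one_self hA, covariance_indicator_one_self hB, hcovA, hcovB, hcovAB]
  simp only [measureReal_def, ← hpA, ← hpB, ← hpAbar, ← hpBbar]
  field_simp
  ring
end
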